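/- arXiv:1603.08655 — 2 statements merged into one kernel-verified Lean document; each statement's English description precedes it below -/
import Mathlib

section
/- Let N be a reticulation-visible network. Then for every reticulation node r of N, every parent of r is a tree node and hence lies in some tree node component of N; moreover the unique child c(r) of r is a tree node that is the root of a tree node component of N, and for every parent p of r, the tree node component rooted at c(r) is below the tree node component containing p. -/
/-!
Framework for rooted phylogenetic networks, formalized as directed graphs
given by an adjacency relation `A : V → V → Prop` on a vertex type `V`,
with a distinguished root `ρ`.  Leaves are identified with their (unique)
labels, i.e. the labelling is the identity on leaf vertices.
-/

namespace PhyloNet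

variable {V : Type} {W : Type}

/-- Indegree of a vertex. -/
noncomputable def inDeg (A : V → V → Prop) (v : V) : ℕ := {u | A u v}.ncard

/-- Outdegree of a vertex. -/
noncomputable def outDeg (A : V → V → Prop) (v : V) : ℕ := {w | A v w}.ncard

/-- `p` is a directed path (walk) from `u` to `v`, given as the list of its vertices. -/
def IsPath (A : V → V → Prop) (u v : V) (p : List V) : Prop :=
  p.Chain' A ∧ p.head? = some u ∧ p.getLast? = some v

/-- `A` with root `ρ` is a phylogenetic network: a finite rooted acyclic digraph whose
root has indegree 0 and outdegree ≥ 2, from which every node is reachable, and in which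
every non-root node is either a leaf (indegree 1, outdegree 0), an internal tree node
(indegree 1, outdegree ≥ 2) or a reticulation (indegree ≥ 2, outdegree 1). -/
structure IsNetwork (A : V → V → Prop) (ρ : V) : Prop where
  finite : Finite V
  acyclic : ∀ v, ¬ Relation.TransGen A v v
  root_indeg : inDeg A ρ = 0
  root_outdeg : 2 ≤ outDeg A ρ
  reach_from_root : ∀ v, Relation.ReflTransGen A ρ v
  degree_cond : ∀ v, v ≠ ρ →
    (inDeg A v = 1 ∧ (outDeg A v = 0 ∨ 2 ≤ outDeg A v)) ∨ (2 ≤ inDeg A v ∧ outDeg A v = 1)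

/-- Reticulation node: indegree ≥ 2 and outdegree 1. -/
def IsRet (A : V → V → Prop) (v : V) : Prop := 2 ≤ inDeg A v ∧ outDeg A v = 1

/-- Leaf: indegree 1 and outdegree 0. -/
def IsLeaf (A : V → V → Prop) (v : V) : Prop := inDeg A v = 1 ∧ outDeg A v = 0

/-- Tree node: any node that is not a reticulation node. -/
def IsTreeNode (A : V → V → Prop) (v : V) : Prop := ¬ IsRet A v

/-- `u` is visible on `v`: every directed path from the root `ρ` to `v` contains `u`. -/
def Visible (A : V → V → Prop) (ρ u v : V) : Prop := ∀ p, IsPath A ρ v p → u ∈ p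

/-- A network is reticulation-visible if every reticulation node is visible on some leaf. -/
def RetVisible (A : V → V → Prop) (ρ : V) : Prop :=
  ∀ r, IsRet A r → ∃ ℓ, IsLeaf A ℓ ∧ Visible A ρ r ℓ

/-- Undirected adjacency in the subgraph `N − R(N)` induced on tree nodes. -/
def TAdj (A : V → V → Prop) (u v : V) : Prop :=
  IsTreeNode A u ∧ IsTreeNode A v ∧ (A u v ∨ A v u)

/-- `S` is a tree node component: a connected component (ignoring directions) of the
subgraph induced on the tree nodes. -/
def IsTNC (A : V → V → Prop) (S : Set V) : Prop :=
  ∃ u, IsTreeNode A u ∧ S = {v | Relation.ReflTransGen (TAdj A) u v}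

/-- `r` is the root of the tree node component `S`: it lies in `S` and has indegree 0
within `N − R(N)`, i.e. it has no tree-node parent. -/
def CompRoot (A : V → V → Prop) (S : Set V) (r : V) : Prop :=
  r ∈ S ∧ ∀ u, IsTreeNode A u → ¬ A u r

/-- Tree node component `C'` is below tree node component `C''`. -/
def Below (A : V → V → Prop) (C' C'' : Set V) : Prop :=
  ∃ r, IsRet A r ∧ (∃ c, A r c ∧ CompRoot A C' c) ∧ (∃ p ∈ C'', A p r)

/-- A big tree node component: a tree node component with at least two nodes. -/
def BigTNC (A : V → V → Prop) (C : Set V) : Prop :=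
  IsTNC A C ∧ ∃ a ∈ C, ∃ b ∈ C, a ≠ b

/-- A single-leaf component: its node set is `{ℓ}` for some leaf `ℓ`. -/
def SingleLeafTNC (A : V → V → Prop) (C : Set V) : Prop :=
  ∃ ℓ, IsLeaf A ℓ ∧ C = {ℓ}

/-- A lowest big tree node component: a big tree node component `C` such that every
tree node component whose root is a proper descendant of the root of `C` is a
single-leaf component. -/
def LowestBig (A : V → V → Prop) (C : Set V) : Prop :=
  BigTNC A C ∧ ∀ C' r' rC, IsTNC A C' → CompRoot A C' r' → CompRoot A C rC →
    Relation.TransGen A rC r' → SingleLeafTNC A C'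

/-- An inner reticulation: all of its parents lie in one and the same tree node component. -/
def InnerRet (A : V → V → Prop) (r : V) : Prop :=
  IsRet A r ∧ ∃ S, IsTNC A S ∧ ∀ p, A p r → p ∈ S

/-- `IR(C)`: reticulations all of whose parents lie in `C`. -/
def IRset (A : V → V → Prop) (C : Set V) : Set V :=
  {r | IsRet A r ∧ ∀ p, A p r → p ∈ C}

/-- `CR(C)`: reticulations with at least one parent in `C` and at least one parent outside `C`. -/
def CRset (A : V → V → Prop) (C : Set V) : Set V :=
  {r | IsRet A r ∧ (∃ p, A p r ∧ p ∈ C) ∧ (∃ p, A p r ∧ p ∉ C)}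

/-- `L_C`: the leaves of the network lying in `C` together with the children of the
inner reticulations below `C`. -/
def LCset (A : V → V → Prop) (C : Set V) : Set V :=
  {ℓ | ℓ ∈ C ∧ IsLeaf A ℓ} ∪ {x | ∃ r ∈ IRset A C, A r x}

/-- Bicombining: every reticulation node has indegree exactly 2. -/
def Bicombining (A : V → V → Prop) : Prop := ∀ r, IsRet A r → inDeg A r = 2

/-- Galled: every reticulation node `r` has an ancestor `u` admitting two
internal-node-disjoint directed paths from `u` to `r` in which every node other
than `r` is a tree node. -/
def Galled (A : V → V → Prop) : Prop :=
  ∀ r, IsRet A r → ∃ u, Relation.TransGen A u r ∧ ∃ p₁ p₂ : List V,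
    IsPath A u r p₁ ∧ IsPath A u r p₂ ∧ p₁ ≠ p₂ ∧
    (∀ x, x ∈ p₁ → x ∈ p₂ → x = u ∨ x = r) ∧
    (∀ x ∈ p₁, x ≠ r → IsTreeNode A x) ∧ (∀ x ∈ p₂, x ≠ r → IsTreeNode A x)

/-- Restriction of a digraph to a vertex subset. -/
def Restrict (A : V → V → Prop) (S : Set V) : V → V → Prop :=
  fun a b => a ∈ S ∧ b ∈ S ∧ A a b

/-- Descendants of `u` (including `u`); the vertex set of the subnetwork `D_N(u)`. -/
def Desc (A : V → V → Prop) (u : V) : Set V := {v | Relation.ReflTransGen A u v}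

/-- Binary network: the root has outdegree 2, leaves have degree 1, and every other
node has total degree 3. -/
def IsBinary (A : V → V → Prop) (ρ : V) : Prop :=
  outDeg A ρ = 2 ∧ ∀ v, v ≠ ρ →
    (inDeg A v = 1 ∧ outDeg A v = 0) ∨ (inDeg A v = 1 ∧ outDeg A v = 2) ∨
    (inDeg A v = 2 ∧ outDeg A v = 1)

/-- A phylogenetic tree: a network with no reticulation nodes. -/
def IsPhyloTree (A : W → W → Prop) (ρ : W) : Prop :=
  IsNetwork A ρ ∧ ∀ w, ¬ IsRet A w

/-- A node with indegree 1 and outdegree 1 (a suppressible node). -/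
def Deg11 (A : V → V → Prop) (v : V) : Prop := inDeg A v = 1 ∧ outDeg A v = 1

/-- There is a directed path from `a` to `b` (of length ≥ 1) all of whose internal
nodes are suppressible. -/
def SubdivPath (A : V → V → Prop) (a b : V) : Prop :=
  ∃ p : List V, IsPath A a b p ∧ 2 ≤ p.length ∧ ∀ z ∈ p, z ≠ a → z ≠ b → Deg11 A z

/-- `φ` witnesses that the digraph `A'` on the vertex set `S` is a subdivision of the
tree `AT` restricted to the vertex set `SW`: `φ` injectively maps the tree nodes onto
the non-suppressible nodes, edges of the tree correspond exactly to directed paths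
whose internal nodes are suppressible, and leaves are mapped according to the leaf
correspondence `θ` (same labels). -/
def SubdivWitness (A' : V → V → Prop) (S : Set V) (AT : W → W → Prop) (SW : Set W)
    (θ : W → V) (φ : W → V) : Prop :=
  Set.InjOn φ SW ∧ (∀ w ∈ SW, φ w ∈ S) ∧
  (∀ x ∈ S, ¬ Deg11 (Restrict A' S) x → ∃ w ∈ SW, φ w = x) ∧
  (∀ x ∈ SW, ∀ y ∈ SW, (Restrict AT SW x y ↔ SubdivPath (Restrict A' S) (φ x) (φ y))) ∧
  (∀ w ∈ SW, outDeg (Restrict AT SW) w = 0 → φ w = θ w)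

/-- The digraph `A'` on vertex set `S` is a subdivision of the tree `AT` on `SW`. -/
def IsSubdivisionOf (A' : V → V → Prop) (S : Set V) (AT : W → W → Prop) (SW : Set W)
    (θ : W → V) : Prop :=
  ∃ φ, SubdivWitness A' S AT SW θ φ

/-- `E`, `D`, `φ` witness that the subnetwork of `A` on vertex set `S` displays the
subtree of `AT` on vertex set `SW`: `E` is a set of reticulation edges of the
subnetwork containing all but one of the incoming edges of each reticulation node of
the subnetwork, `D` is a set of deleted nodes, and `φ` witnesses that the result is a
subdivision of the subtree. -/
def DisplayWitness (A : V → V → Prop) (S : Set V) (AT : W → W → Prop) (SW : Set W)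
    (θ : W → V) (E : Set (V × V)) (D : Set V) (φ : W → V) : Prop :=
  (∀ e ∈ E, Restrict A S e.1 e.2 ∧ 2 ≤ inDeg (Restrict A S) e.2) ∧
  (∀ r ∈ S, 2 ≤ inDeg (Restrict A S) r →
     ∃ p, Restrict A S p r ∧ (p, r) ∉ E ∧ ∀ q, Restrict A S q r → q ≠ p → (q, r) ∈ E) ∧
  SubdivWitness (fun a b => Restrict A S a b ∧ (a, b) ∉ E) (S \ D) AT SW θ φ

/-- The subnetwork of `A` on vertex set `S` displays the subtree of `AT` on `SW`. -/
def DisplaysOn (A : V → V → Prop) (S : Set V) (AT : W → W → Prop) (SW : Set W)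
    (θ : W → V) : Prop :=
  ∃ E D φ, DisplayWitness A S AT SW θ E D φ

/-- The leaves of the subnetwork of `A` induced on vertex set `S`. -/
def SubLeaves (A : V → V → Prop) (S : Set V) : Set V :=
  {v | v ∈ S ∧ outDeg (Restrict A S) v = 0}

/-- `B` is a soft cluster in the subnetwork of `A` on vertex set `S`: `B` is the
cluster of some node of some phylogenetic tree displayed by that subnetwork. -/
def SoftClusterOn (A : V → V → Prop) (S : Set V) (B : Set V) : Prop :=
  ∃ (W : Type) (AT : W → W → Prop) (ρT : W) (θ : W → V),
    IsPhyloTree AT ρT ∧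
    Set.BijOn θ {w | IsLeaf AT w} (SubLeaves A S) ∧
    DisplaysOn A S AT Set.univ θ ∧
    ∃ x : W, θ '' {w | IsLeaf AT w ∧ Relation.ReflTransGen AT x w} = B

/-- `B` is a soft cluster of the node `u` of `N`: there are `E` and `D` as in the
definition of display such that `u` is a node of `(N − E) − D` and the set of leaves
of `N` below `u` in `(N − E) − D` equals `B`. -/
def SoftClusterAt (A : V → V → Prop) (u : V) (B : Set V) : Prop :=
  ∃ (E : Set (V × V)) (D : Set V),
    (∀ e ∈ E, A e.1 e.2 ∧ 2 ≤ inDeg A e.2) ∧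
    (∀ r, 2 ≤ inDeg A r → ∃ p, A p r ∧ (p, r) ∉ E ∧ ∀ q, A q r → q ≠ p → (q, r) ∈ E) ∧
    (∃ (W : Type) (AT : W → W → Prop) (ρT : W) (θ : W → V),
      IsPhyloTree AT ρT ∧ Set.BijOn θ {w | IsLeaf AT w} {v | IsLeaf A v} ∧
      IsSubdivisionOf (fun a b => A a b ∧ (a, b) ∉ E) (Set.univ \ D) AT Set.univ θ) ∧
    u ∉ D ∧
    {ℓ | IsLeaf A ℓ ∧
      Relation.ReflTransGen (fun a b => A a b ∧ (a, b) ∉ E ∧ a ∉ D ∧ b ∉ D) u ℓ} = B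

/-- `w` is the lowest common ancestor of the set `X` in the (tree-like) digraph `A`. -/
def IsLCAIn (A : V → V → Prop) (X : Set V) (w : V) : Prop :=
  (∀ x ∈ X, Relation.ReflTransGen A w x) ∧
  ∀ w', (∀ x ∈ X, Relation.ReflTransGen A w' x) → Relation.ReflTransGen A w' w

end PhyloNet

/-!
The key fact is that in a reticulation-visible network a reticulation `x` never has a
reticulation child. Let `x` be visible on the leaf `ℓ`, let `y` be its unique child, and suppose
`y` has a second parent `q ≠ x`. Then `y ⇝ ℓ`, and the root path `ρ ⇝ q → y ⇝ ℓ` must meet `x`,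
either before `q` or after `y`; as the only edge leaving `x` enters `y`, both cases close a
directed cycle through `y`.

Hence the parents and the child `c` of a reticulation `r` are tree nodes, and `r` is the only
parent of `c`. So `c` has no tree-node parent: it roots its tree node component, which lies
below the component of every parent of `r`, witnessed by `r` itself.
-/

namespace PhyloNet

variable {V : Type} {A : V → V → Prop}

section Paths

variable {u v : V} {p : List V}

theorem exists_isPath_of_reflTransGen (h : Relation.ReflTransGen A u v) :
    ∃ p, IsPath A u v p := by
  obtain ⟨l, hchain, hlast⟩ := List.exists_isChain_cons_of_relationReflTransGen h
  exact ⟨u :: l, hchain, rfl, by rw [List.getLast?_eq_some_getLast (List.cons_ne_nil u l), hlast]⟩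

theorem IsPath.reflTransGen_of_mem (hp : IsPath A u v p) {z : V} (hz : z ∈ p) :
    Relation.ReflTransGen A u z ∧ Relation.ReflTransGen A z v := by
  obtain ⟨hchain, hhead, hlast⟩ := hp
  have hne : p ≠ [] := by rintro rfl; simp at hhead
  rw [List.head?_eq_some_head hne, Option.some_inj] at hhead
  rw [List.getLast?_eq_some_getLast hne, Option.some_inj] at hlast
  exact ⟨hchain.induction (Relation.ReflTransGen A u) _ (fun _ _ hxy hx => hx.tail hxy)
      (fun _ => hhead ▸ .refl) z hz,
    hchain.backwards_induction (Relation.ReflTransGen A · v) _ (fun _ _ hxy hy => hy.head hxy)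
      (fun _ => hlast ▸ .refl) z hz⟩

theorem IsPath.append {a b : V} {q : List V} (hp : IsPath A u a p) (hab : A a b)
    (hq : IsPath A b v q) : IsPath A u v (p ++ q) := by
  obtain ⟨hpc, hph, hpl⟩ := hp
  obtain ⟨hqc, hqh, hql⟩ := hq
  have hne : p ≠ [] := by rintro rfl; simp at hph
  refine ⟨hpc.append hqc ?_, ?_, ?_⟩
  · rw [hpl, hqh]
    rintro _ ⟨⟩ _ ⟨⟩
    exact hab
  · rw [List.head?_append_of_ne_nil _ hne, hph]
  · rw [List.getLast?_append, hql]
    rfl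

end Paths

section Visibility

variable {ρ x ℓ : V}

theorem Visible.reflTransGen (hvis : Visible A ρ x ℓ) (h : Relation.ReflTransGen A ρ ℓ) :
    Relation.ReflTransGen A x ℓ :=
  let ⟨_, hp⟩ := exists_isPath_of_reflTransGen h
  (hp.reflTransGen_of_mem (hvis _ hp)).2

theorem Visible.reflTransGen_or_of_adj (hvis : Visible A ρ x ℓ) {a b : V}
    (hρa : Relation.ReflTransGen A ρ a) (hab : A a b) (hbℓ : Relation.ReflTransGen A b ℓ) :
    Relation.ReflTransGen A x a ∨ Relation.ReflTransGen A b x := by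
  obtain ⟨p, hp⟩ := exists_isPath_of_reflTransGen hρa
  obtain ⟨q, hq⟩ := exists_isPath_of_reflTransGen hbℓ
  rcases List.mem_append.1 (hvis _ (hp.append hab hq)) with hx | hx
  · exact .inl (hp.reflTransGen_of_mem hx).2
  · exact .inr (hq.reflTransGen_of_mem hx).1

end Visibility

section Degrees

theorem eq_of_outDeg_eq_one {v w w' : V} (h : outDeg A v = 1) (hw : A v w) (hw' : A v w') :
    w' = w := by
  obtain ⟨a, ha⟩ := Set.ncard_eq_one.1 h
  have hwa : w ∈ ({a} : Set V) := ha ▸ hw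
  have hw'a : w' ∈ ({a} : Set V) := ha ▸ hw'
  exact hw'a.trans hwa.symm

theorem reflTransGen_of_outDeg_eq_one {x y z : V} (h : outDeg A x = 1) (hxy : A x y)
    (hxz : Relation.TransGen A x z) : Relation.ReflTransGen A y z := by
  obtain ⟨w, hxw, hwz⟩ := Relation.TransGen.head'_iff.1 hxz
  exact eq_of_outDeg_eq_one h hxy hxw ▸ hwz

theorem eq_of_inDeg_lt_two [Finite V] {u v w : V} (h : inDeg A v < 2) (hu : A u v)
    (hw : A w v) : u = w :=
  (Set.ncard_le_one).1 (Nat.lt_succ_iff.1 h) u hu w hw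

end Degrees

section RetVisible

variable {ρ r : V} (hRV : RetVisible A ρ) (hN : IsNetwork A ρ)
include hRV hN

theorem RetVisible.inDeg_lt_two_of_isRet_adj {x y : V} (hx : IsRet A x) (hxy : A x y) :
    inDeg A y < 2 := by
  by_contra! hy
  obtain ⟨ℓ, hℓ, hvis⟩ := hRV x hx
  have hxℓ : Relation.TransGen A x ℓ := by
    refine (Relation.reflTransGen_iff_eq_or_transGen.1
      (hvis.reflTransGen (hN.reach_from_root ℓ))).resolve_left ?_
    rintro rfl
    exact absurd hℓ.2 (by rw [hx.2]; exact one_ne_zero)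
  obtain ⟨q, hqy, hqx⟩ := Set.exists_ne_of_one_lt_ncard hy x
  rcases hvis.reflTransGen_or_of_adj (hN.reach_from_root q) hqy
      (reflTransGen_of_outDeg_eq_one hx.2 hxy hxℓ) with hxq | hyx
  · have hyq := reflTransGen_of_outDeg_eq_one hx.2 hxy
      ((Relation.reflTransGen_iff_eq_or_transGen.1 hxq).resolve_left hqx)
    exact hN.acyclic y (.tail' hyq hqy)
  · exact hN.acyclic y (.tail' hyx hxy)

theorem RetVisible.isTreeNode_of_adj_isRet {p : V} (hr : IsRet A r) (hpr : A p r) :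
    IsTreeNode A p := fun hp =>
  (hRV.inDeg_lt_two_of_isRet_adj hN hp hpr).not_ge hr.1

theorem RetVisible.isTreeNode_of_isRet_adj {c : V} (hr : IsRet A r) (hrc : A r c) :
    IsTreeNode A c := fun hc =>
  (hRV.inDeg_lt_two_of_isRet_adj hN hr hrc).not_ge hc.1

theorem RetVisible.not_adj_of_isRet_adj {c u : V} (hr : IsRet A r) (hrc : A r c)
    (hu : IsTreeNode A u) : ¬ A u c := fun huc =>
  have := hN.finite
  hu (eq_of_inDeg_lt_two (hRV.inDeg_lt_two_of_isRet_adj hN hr hrc) hrc huc ▸ hr)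

end RetVisible

/-- In a reticulation-visible network, for every reticulation node `r`: every parent of
`r` is a tree node lying in some tree node component; the unique child of `r` is a
tree node that is the root of a tree node component; and for every parent `p` of `r`,
the component rooted at the child of `r` is below the component containing `p`. -/
theorem reticulation_between_components {V : Type} (A : V → V → Prop) (ρ : V)
    (hN : IsNetwork A ρ) (hRV : RetVisible A ρ)
    (r : V) (hr : IsRet A r) :
    (∀ p, A p r → IsTreeNode A p ∧ ∃ S, IsTNC A S ∧ p ∈ S) ∧
    (∀ c, A r c → IsTreeNode A c ∧ ∃ S', IsTNC A S' ∧ CompRoot A S' c ∧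
      ∀ p S, A p r → IsTNC A S → p ∈ S → Below A S' S) := by
  refine ⟨fun p hpr => ?_, fun c hrc => ?_⟩
  · have hp := hRV.isTreeNode_of_adj_isRet hN hr hpr
    exact ⟨hp, _, ⟨p, hp, rfl⟩, .refl⟩
  · have hc := hRV.isTreeNode_of_isRet_adj hN hr hrc
    have hroot : CompRoot A {v | Relation.ReflTransGen (TAdj A) c v} c :=
      ⟨.refl, fun _ hu => hRV.not_adj_of_isRet_adj hN hr hrc hu⟩
    exact ⟨hc, _, ⟨c, hc, rfl⟩, hroot, fun p S hpr _ hpS => ⟨r, hr, ⟨c, hrc, hroot⟩, p, hpS, hpr⟩⟩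

end PhyloNet
end

section
/- Let N be a reticulation-visible network with at least two leaves. Then N has a big tree node component C such that every tree node component of N whose root is a proper descendant of the root of C is a single-leaf component (i.e., below C there are only single-leaf components). -/
/-!
Choose a big tree node component `C` whose root is lowest among the roots of big components;
there is one, because the component of `ρ` is big and the network is acyclic. A component `C'`
whose root `v` lies strictly below the root of `C` is then not big, so `C' = {v}`: the parent `r`
of `v` and all children of `v` are reticulations. If `v` were not a leaf, the leaf `ℓ ≠ v` on
which `r` is visible would be one of the nodes other than `r` and `v` that cannot be reached
from `ρ` avoiding `r`. A lowest such node has `v` as its only parent, so it is a tree-node child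
of `v`, which is impossible.
-/

namespace PhyloNet

variable {V : Type} {A : V → V → Prop} {ρ : V}

lemma eq_of_inDeg_eq_one {v a b : V} (h : inDeg A v = 1) (ha : A a v) (hb : A b v) : a = b := by
  obtain ⟨c, hc⟩ := Set.ncard_eq_one.mp h
  have ha' : a ∈ {u | A u v} := ha
  have hb' : b ∈ {u | A u v} := hb
  rw [hc] at ha' hb'
  exact ha'.trans hb'.symm

lemma eq_of_outDeg_eq_one_s6 {u a b : V} (h : outDeg A u = 1) (ha : A u a) (hb : A u b) :
    a = b := by
  obtain ⟨c, hc⟩ := Set.ncard_eq_one.mp h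
  have ha' : a ∈ {w | A u w} := ha
  have hb' : b ∈ {w | A u w} := hb
  rw [hc] at ha' hb'
  exact ha'.trans hb'.symm

lemma IsLeaf.ne_of_outDeg_pos {ℓ v : V} (hℓ : IsLeaf A ℓ) (hv : 0 < outDeg A v) : ℓ ≠ v := by
  rintro rfl
  have := hℓ.2
  omega

lemma isTreeNode_of_forall_parent_eq {v y : V} (h : ∀ p, A p y → p = v) : IsTreeNode A y := by
  rintro ⟨hin, -⟩
  have : inDeg A y ≤ 1 :=
    (Set.ncard_le_ncard h (Set.finite_singleton v)).trans_eq (Set.ncard_singleton v)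
  omega

namespace IsNetwork

lemma not_adj_root (hN : IsNetwork A ρ) (u : V) : ¬ A u ρ := fun h => by
  have := hN.finite
  have := (Set.ncard_pos (Set.toFinite {u | A u ρ})).mpr ⟨u, h⟩
  have := hN.root_indeg
  unfold inDeg at this
  omega

lemma ne_root_of_isRet (hN : IsNetwork A ρ) {r : V} (hr : IsRet A r) : r ≠ ρ := by
  rintro rfl
  have := hr.1
  rw [hN.root_indeg] at this
  omega

lemma isTreeNode_root (hN : IsNetwork A ρ) : IsTreeNode A ρ := fun h => hN.ne_root_of_isRet h rfl

lemma exists_parent (hN : IsNetwork A ρ) {v : V} (hv : v ≠ ρ) : ∃ u, A u v := by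
  rcases (hN.reach_from_root v).cases_tail with h | ⟨u, -, hu⟩
  · exact absurd h hv
  · exact ⟨u, hu⟩

lemma inDeg_eq_one_of_isTreeNode (hN : IsNetwork A ρ) {v : V} (hv : v ≠ ρ)
    (ht : IsTreeNode A v) : inDeg A v = 1 := by
  rcases hN.degree_cond v hv with ⟨h, -⟩ | h
  · exact h
  · exact absurd h ht

lemma wellFounded (hN : IsNetwork A ρ) : WellFounded (Relation.TransGen A) :=
  have := hN.finite
  have : Std.Irrefl (Relation.TransGen A) := ⟨hN.acyclic⟩
  Finite.wellFounded_of_trans_of_irrefl _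

lemma wellFounded_swap (hN : IsNetwork A ρ) :
    WellFounded (Function.swap (Relation.TransGen A)) :=
  have := hN.finite
  have : Std.Irrefl (Function.swap (Relation.TransGen A)) := ⟨hN.acyclic⟩
  Finite.wellFounded_of_trans_of_irrefl _

lemma exists_mem_forall_parent_not_mem (hN : IsNetwork A ρ) {S : Set V} (hS : S.Nonempty) :
    ∃ y ∈ S, ∀ p, A p y → p ∉ S := by
  obtain ⟨y, hy, hmin⟩ := hN.wellFounded.has_min S hS
  exact ⟨y, hy, fun p hp hpS => hmin p hpS (.single hp)⟩

lemma exists_isTreeNode_child_root (hN : IsNetwork A ρ) : ∃ y, A ρ y ∧ IsTreeNode A y := by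
  obtain ⟨c, hc⟩ : {w | A ρ w}.Nonempty :=
    Set.nonempty_of_ncard_ne_zero (by have := hN.root_outdeg; unfold outDeg at this; omega)
  obtain ⟨y, hyρ, hpar⟩ := hN.exists_mem_forall_parent_not_mem (S := {x | x ≠ ρ})
    ⟨c, fun h => hN.not_adj_root ρ (h ▸ hc)⟩
  have hpar : ∀ p, A p y → p = ρ := fun p hp => not_not.mp (hpar p hp)
  obtain ⟨p, hp⟩ := hN.exists_parent hyρ
  exact ⟨y, hpar p hp ▸ hp, isTreeNode_of_forall_parent_eq hpar⟩

end IsNetwork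

lemma exists_isPath_avoiding {r u v : V} (hu : u ≠ r)
    (h : Relation.ReflTransGen (fun a b => A a b ∧ b ≠ r) u v) :
    ∃ p, IsPath A u v p ∧ r ∉ p := by
  obtain ⟨l, hl, hlast⟩ := List.exists_isChain_cons_of_relationReflTransGen h
  have hne_r := hl.induction (· ≠ r) _ (fun _ _ h _ => h.2) (fun _ => hu)
  refine ⟨u :: l, ⟨hl.imp fun _ _ h => h.1, rfl, ?_⟩, fun hr => hne_r r hr rfl⟩
  rw [List.getLast?_eq_some_getLast (List.cons_ne_nil _ _), hlast]

lemma Visible.not_reflTransGen_avoiding {r ℓ : V} (hvis : Visible A ρ r ℓ) (hρr : ρ ≠ r) :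
    ¬ Relation.ReflTransGen (fun a b => A a b ∧ b ≠ r) ρ ℓ := fun h => by
  obtain ⟨p, hp, hrp⟩ := exists_isPath_avoiding hρr h
  exact hrp (hvis p hp)

lemma IsNetwork.exists_isTreeNode_child_of_visible (hN : IsNetwork A ρ) {r v ℓ : V}
    (hr : IsRet A r) (hrv : A r v) (hvis : Visible A ρ r ℓ) (hℓr : ℓ ≠ r) (hℓv : ℓ ≠ v) :
    ∃ y, A v y ∧ IsTreeNode A y := by
  set X := {x | Relation.ReflTransGen (fun a b => A a b ∧ b ≠ r) ρ x}
  have hρr : ρ ≠ r := (hN.ne_root_of_isRet hr).symm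
  obtain ⟨y, ⟨hyX, hyr, hyv⟩, hmin⟩ := hN.exists_mem_forall_parent_not_mem
    (S := {y | y ∉ X ∧ y ≠ r ∧ y ≠ v}) ⟨ℓ, hvis.not_reflTransGen_avoiding hρr, hℓr, hℓv⟩
  have hpar : ∀ p, A p y → p = v := by
    intro p hp
    by_contra hpv
    refine hmin p hp ⟨fun hpX => hyX (hpX.tail ⟨hp, hyr⟩), ?_, hpv⟩
    rintro rfl
    exact hyv (eq_of_outDeg_eq_one_s6 hr.2 hp hrv)
  obtain ⟨p, hp⟩ := hN.exists_parent (v := y) (by rintro rfl; exact hyX .refl)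
  exact ⟨y, hpar p hp ▸ hp, isTreeNode_of_forall_parent_eq hpar⟩

instance (A : V → V → Prop) : Std.Symm (TAdj A) := ⟨fun _ _ ⟨hu, hv, h⟩ => ⟨hv, hu, h.symm⟩⟩

namespace IsTNC

variable {S : Set V}

lemma reflTransGen_tAdj (hS : IsTNC A S) {x y : V} (hx : x ∈ S) (hy : y ∈ S) :
    Relation.ReflTransGen (TAdj A) x y := by
  obtain ⟨u, -, rfl⟩ := hS
  exact (symm hx : Relation.ReflTransGen (TAdj A) x u).trans hy

lemma isTreeNode_of_mem (hS : IsTNC A S) {y : V} (hy : y ∈ S) : IsTreeNode A y := by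
  obtain ⟨u, hu, rfl⟩ := hS
  rcases (show Relation.ReflTransGen (TAdj A) u y from hy).cases_tail with rfl | ⟨c, -, hc⟩
  · exact hu
  · exact hc.2.1

lemma mem_of_adj (hS : IsTNC A S) {x y : V} (hx : x ∈ S) (hy : IsTreeNode A y) (hxy : A x y) :
    y ∈ S := by
  obtain ⟨u, hu, rfl⟩ := hS
  exact Relation.ReflTransGen.tail hx ⟨isTreeNode_of_mem ⟨u, hu, rfl⟩ hx, hy, .inl hxy⟩

/-- Walking an undirected path from the root of the component, a step against an edge `b → a`
retraces the last edge into `a`, since the tree node `a` has a single parent. -/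
lemma reflTransGen_of_compRoot (hN : IsNetwork A ρ) (hS : IsTNC A S) {x y : V}
    (hx : CompRoot A S x) (hy : y ∈ S) :
    Relation.ReflTransGen (fun a b => A a b ∧ IsTreeNode A a) x y := by
  have hxy := hS.reflTransGen_tAdj hx.1 hy
  clear hy
  induction hxy with
  | refl => exact .refl
  | @tail a b _ hab ih =>
    obtain ⟨ta, tb, hab | hba⟩ := hab
    · exact ih.tail ⟨hab, ta⟩
    rcases ih.cases_tail with rfl | ⟨c, hxc, hca, -⟩
    · exact absurd hba (hx.2 b tb)
    · have haρ : a ≠ ρ := fun h => hN.not_adj_root b (h ▸ hba)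
      rwa [eq_of_inDeg_eq_one (hN.inDeg_eq_one_of_isTreeNode haρ ta) hba hca]

lemma compRoot_unique (hN : IsNetwork A ρ) (hS : IsTNC A S) {x y : V} (hx : CompRoot A S x)
    (hy : CompRoot A S y) : y = x := by
  rcases (hS.reflTransGen_of_compRoot hN hx hy.1).cases_tail with h | ⟨c, -, hcy, hc⟩
  · exact h
  · exact absurd hcy (hy.2 c hc)

lemma eq_singleton_of_not_bigTNC (hS : IsTNC A S) {x : V} (hx : x ∈ S) (h : ¬ BigTNC A S) :
    S = {x} :=
  Set.eq_singleton_iff_unique_mem.mpr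
    ⟨hx, fun y hy => by_contra fun hyx => h ⟨hS, y, hy, x, hx, hyx⟩⟩

end IsTNC

lemma IsNetwork.bigTNC_rootComponent (hN : IsNetwork A ρ) :
    BigTNC A {v | Relation.ReflTransGen (TAdj A) ρ v} := by
  obtain ⟨y, hy, ty⟩ := hN.exists_isTreeNode_child_root
  exact ⟨⟨ρ, hN.isTreeNode_root, rfl⟩, ρ, .refl, y, .single ⟨hN.isTreeNode_root, ty, .inl hy⟩,
    fun h => hN.not_adj_root ρ (h ▸ hy)⟩

lemma IsNetwork.compRoot_rootComponent (hN : IsNetwork A ρ) :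
    CompRoot A {v | Relation.ReflTransGen (TAdj A) ρ v} ρ :=
  ⟨.refl, fun u _ => hN.not_adj_root u⟩

lemma IsNetwork.singleLeafTNC_of_not_bigTNC (hN : IsNetwork A ρ) (hRV : RetVisible A ρ)
    {S : Set V} {v : V} (hS : IsTNC A S) (hv : CompRoot A S v) (hvρ : v ≠ ρ) (h : ¬ BigTNC A S) :
    SingleLeafTNC A S := by
  have hSv := hS.eq_singleton_of_not_bigTNC hv.1 h
  have tv := hS.isTreeNode_of_mem hv.1
  have hin := hN.inDeg_eq_one_of_isTreeNode hvρ tv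
  rcases hN.degree_cond v hvρ with ⟨-, hout | hout⟩ | hret
  · exact ⟨v, ⟨hin, hout⟩, hSv⟩
  · exfalso
    obtain ⟨r, hrv⟩ := hN.exists_parent hvρ
    have hr : IsRet A r := not_not.mp fun tr => hv.2 r tr hrv
    obtain ⟨ℓ, hℓ, hvis⟩ := hRV r hr
    obtain ⟨y, hvy, ty⟩ := hN.exists_isTreeNode_child_of_visible hr hrv hvis
      (hℓ.ne_of_outDeg_pos (hr.2 ▸ one_pos)) (hℓ.ne_of_outDeg_pos (by omega))
    have hyv : y = v := by simpa [hSv] using hS.mem_of_adj hv.1 ty hvy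
    exact hN.acyclic v (.single (hyv ▸ hvy))
  · exact absurd hret tv

theorem exists_lowest_big_component_general {V : Type} (A : V → V → Prop) (ρ : V)
    (hN : IsNetwork A ρ) (hRV : RetVisible A ρ) :
    ∃ C, LowestBig A C := by
  obtain ⟨x, ⟨C, hC, hx⟩, hmin⟩ :=
    hN.wellFounded_swap.has_min {x | ∃ C, BigTNC A C ∧ CompRoot A C x}
      ⟨ρ, _, hN.bigTNC_rootComponent, hN.compRoot_rootComponent⟩
  refine ⟨C, hC, fun C' v rC hC' hv hrC hxv => ?_⟩
  obtain rfl := hC.1.compRoot_unique hN hx hrC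
  obtain ⟨u, -, huv⟩ := Relation.TransGen.tail'_iff.mp hxv
  exact hN.singleLeafTNC_of_not_bigTNC hRV hC' hv (fun h => hN.not_adj_root u (h ▸ huv))
    fun hbig => hmin v ⟨C', hbig, hv⟩ hxv

/-- Every reticulation-visible network with at least two leaves has a big tree node
component `C` such that every tree node component whose root is a proper descendant
of the root of `C` is a single-leaf component. -/
theorem exists_lowest_big_component {V : Type} (A : V → V → Prop) (ρ : V)
    (hN : IsNetwork A ρ) (hRV : RetVisible A ρ)
    (hleaves : ∃ ℓ₁ ℓ₂, IsLeaf A ℓ₁ ∧ IsLeaf A ℓ₂ ∧ ℓ₁ ≠ ℓ₂) :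
    ∃ C, LowestBig A C :=
  exists_lowest_big_component_general A ρ hN hRV

end PhyloNet
end
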